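/- Let P be a Feller Markov operator on S¹ that is asymptotically stable with unique invariant measure μ* of full support, and which satisfies the e-property. Then for every open arc I ⊂ S¹ there exists m ∈ ℕ such that inf_{x ∈ S¹} Pᵐδ_x(I) > 0. -/

import Mathlib

open MeasureTheory Filter

abbrev Circle1 := AddCircle (1 : ℝ)

noncomputable def rep (u : Circle1) : ℝ := (AddCircle.equivIco 1 0 u : ℝ)

/-- The open counterclockwise arc from `a` to `b`. -/
def openArc (a b : Circle1) : Set Circle1 :=
  {z | 0 < rep (z - a) ∧ rep (z - a) < rep (b - a)}

/-! Take a Lipschitz bump `f` supported in the arc `I`. By the e-property the functions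
`y ↦ ∫ f d(Pⁿδ_y)` are equicontinuous, so on the compact circle their pointwise convergence to
`∫ f dμ*` is uniform (Arzelà–Ascoli). Full support gives `∫ f dμ* > 0`, hence for some `m`,
`Pᵐδ_y(I) ≥ ∫ f d(Pᵐδ_y) ≥ ½ ∫ f dμ*` for every `y`. -/

open Topology

lemma continuousAt_rep {u : Circle1} (hu : u ≠ 0) : ContinuousAt rep u :=
  continuousAt_subtype_val.comp (AddCircle.continuousAt_equivIco 1 0 (by simpa using hu))

lemma rep_zero : rep 0 = 0 := by
  rw [rep, ← AddCircle.coe_zero, AddCircle.equivIco_coe_eq (by norm_num)]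

lemma isOpen_openArc (a b : Circle1) : IsOpen (openArc a b) := by
  have hrep : IsOpen (rep ⁻¹' Set.Ioo 0 (rep (b - a))) := by
    have hcont : ContinuousOn rep {0}ᶜ :=
      continuousOn_of_forall_continuousAt fun _ hu => continuousAt_rep hu
    have h := hcont.isOpen_inter_preimage isOpen_compl_singleton
      (isOpen_Ioo (a := 0) (b := rep (b - a)))
    rwa [Set.inter_eq_right.mpr] at h
    rintro u hu rfl
    simp [rep_zero] at hu
  exact hrep.preimage (continuous_sub_right a)

section PseudoMetric

variable {X : Type*} [PseudoMetricSpace X]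

lemma equicontinuous_of_forall_abs_sub_le {ι : Type*} {F : ι → X → ℝ}
    (h : ∀ x, ∀ ε > (0 : ℝ), ∃ δ > (0 : ℝ), ∀ y, dist y x < δ → ∀ i, |F i y - F i x| ≤ ε) :
    Equicontinuous F := by
  intro x
  rw [Metric.equicontinuousAt_iff]
  intro ε hε
  obtain ⟨δ, hδ, hF⟩ := h x (ε / 2) (half_pos hε)
  refine ⟨δ, hδ, fun y hy i => ?_⟩
  rw [dist_comm, Real.dist_eq]
  exact (hF y hy i).trans_lt (half_lt_self hε)

lemma exists_lipschitz_bump {V : Set X} (hV : IsOpen V) {z : X} (hz : z ∈ V) :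
    ∃ (f : X → ℝ) (K : NNReal), LipschitzWith K f ∧ 0 ≤ f ∧ f ≤ V.indicator 1 ∧ f z ≠ 0 := by
  obtain ⟨r, hr, hball⟩ := Metric.isOpen_iff.mp hV z hz
  have hlip := (lipschitzWith_smul r⁻¹).comp
    (((LipschitzWith.const (α := X) r).sub (LipschitzWith.dist_left z)).max_const 0)
  refine ⟨_, _, hlip, fun y => ?_, fun y => ?_, by simp [hr.ne', hr.le]⟩
  · simp only [Function.comp_apply, smul_eq_mul, Pi.zero_apply]
    positivity
  · simp only [Function.comp_apply, smul_eq_mul]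
    by_cases hy : y ∈ V
    · rw [Set.indicator_of_mem hy, Pi.one_apply, inv_mul_le_one₀ hr, max_le_iff]
      exact ⟨by linarith [dist_nonneg (x := y) (y := z)], hr.le⟩
    · have : r ≤ dist y z := not_lt.mp fun h => hy (hball (Metric.mem_ball.mpr h))
      simp [Set.indicator_of_notMem hy, this]

theorem Equicontinuous.tendstoUniformly_of_tendsto {ι α : Type*} [UniformSpace α]
    [CompactSpace X] {F : ι → X → α} (hF : Equicontinuous F) {l : Filter ι} {f : X → α}
    (h : ∀ x, Tendsto (F · x) l (𝓝 (f x))) : TendstoUniformly F f l :=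
  UniformFun.tendsto_iff_tendstoUniformly.mp
    ((hF.tendsto_uniformFun_iff_pi l f).mpr (tendsto_pi_nhds.mpr h))

end PseudoMetric

section Measure

variable {Y : Type*} [MeasurableSpace Y]

lemma isProbabilityMeasure_iterate {P : Measure Y → Measure Y}
    (hP : ∀ μ, IsProbabilityMeasure μ → IsProbabilityMeasure (P μ)) {μ : Measure Y}
    [IsProbabilityMeasure μ] (n : ℕ) : IsProbabilityMeasure (P^[n] μ) := by
  induction n with
  | zero => assumption
  | succ n ih => rw [Function.iterate_succ_apply']; exact hP _ ih

lemma integral_le_measureReal_of_le_indicator (μ : Measure Y) [IsFiniteMeasure μ]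
    {f : Y → ℝ} (hf : Integrable f μ) {V : Set Y} (hV : MeasurableSet V)
    (hfV : f ≤ V.indicator 1) : ∫ y, f y ∂μ ≤ μ.real V := by
  rw [← integral_indicator_one hV]
  exact integral_mono hf
    ((integrable_indicator_iff hV).mpr (integrableOn_const (measure_ne_top μ V))) hfV

end Measure

theorem exists_iterate_pos_iInf_measure_dirac {X : Type*} [PseudoMetricSpace X] [CompactSpace X]
    [MeasurableSpace X] [BorelSpace X] (P : Measure X → Measure X)
    (hMarkov : ∀ μ, IsProbabilityMeasure μ → IsProbabilityMeasure (P μ))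
    (μstar : Measure X) [IsProbabilityMeasure μstar] [μstar.IsOpenPosMeasure]
    (hstable : ∀ (f : C(X, ℝ)) x,
      Tendsto (fun n => ∫ z, f z ∂(P^[n] (.dirac x))) atTop (𝓝 (∫ z, f z ∂μstar)))
    (heprop : ∀ (f : X → ℝ) (K : NNReal), LipschitzWith K f →
      Equicontinuous fun n y => ∫ z, f z ∂(P^[n] (.dirac y)))
    {V : Set X} (hV : IsOpen V) (hne : V.Nonempty) :
    ∃ m, 0 < ⨅ x, P^[m] (.dirac x) V := by
  obtain ⟨z₀, hz₀⟩ := hne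
  obtain ⟨f, K, hlip, hf0, hfV, hfz₀⟩ := exists_lipschitz_bump hV hz₀
  have hint (μ : Measure X) [IsFiniteMeasure μ] : Integrable f μ :=
    hlip.continuous.integrable_of_hasCompactSupport (HasCompactSupport.of_compactSpace f)
  set c := ∫ z, f z ∂μstar
  have hc : 0 < c :=
    hlip.continuous.integral_pos_of_hasCompactSupport_nonneg_nonzero
      (HasCompactSupport.of_compactSpace f) hf0 hfz₀
  have hunif := (heprop f K hlip).tendstoUniformly_of_tendsto (hstable ⟨f, hlip.continuous⟩)
  simp only [ContinuousMap.coe_mk] at hunif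
  obtain ⟨m, hm⟩ := (Metric.tendstoUniformly_iff.mp hunif (c / 2) (half_pos hc)).exists
  refine ⟨m, (ENNReal.ofReal_pos.mpr (half_pos hc)).trans_le (le_iInf fun x => ?_)⟩
  have := isProbabilityMeasure_iterate hMarkov (μ := .dirac x) m
  have hmx : c / 2 ≤ ∫ z, f z ∂(P^[m] (.dirac x)) := by
    have hx := hm x
    rw [Real.dist_eq, abs_lt] at hx
    linarith
  rw [← ofReal_measureReal (measure_ne_top _ _)]
  exact ENNReal.ofReal_le_ofReal
    (hmx.trans (integral_le_measureReal_of_le_indicator _ (hint _) hV.measurableSet hfV))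

theorem uniform_lower_bound_on_arcs_general
    (P : Measure Circle1 → Measure Circle1)
    (hMarkov : ∀ μ : Measure Circle1, IsProbabilityMeasure μ → IsProbabilityMeasure (P μ))
    (μstar : Measure Circle1) [IsProbabilityMeasure μstar]
    (hfull : ∀ V : Set Circle1, IsOpen V → V.Nonempty → 0 < μstar V)
    (hstable : ∀ (ν : Measure Circle1), IsProbabilityMeasure ν → ∀ f : C(Circle1, ℝ),
      Tendsto (fun n : ℕ => ∫ x, f x ∂(P^[n] ν)) atTop (nhds (∫ x, f x ∂μstar)))
    (heprop : ∀ (f : Circle1 → ℝ) (L : NNReal), LipschitzWith L f →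
      ∀ x : Circle1, ∀ ε > (0 : ℝ), ∃ δ > (0 : ℝ), ∀ y : Circle1, dist y x < δ →
        ∀ n : ℕ, |(∫ z, f z ∂(P^[n] (Measure.dirac y))) -
          (∫ z, f z ∂(P^[n] (Measure.dirac x)))| ≤ ε) :
    ∀ a b : Circle1, (openArc a b).Nonempty →
      ∃ m : ℕ, 0 < ⨅ x : Circle1, (P^[m] (Measure.dirac x)) (openArc a b) := by
  intro a b hne
  have : μstar.IsOpenPosMeasure := ⟨fun V hV hne => (hfull V hV hne).ne'⟩
  exact exists_iterate_pos_iInf_measure_dirac P hMarkov μstar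
    (fun f x => hstable _ inferInstance f)
    (fun f K hf => equicontinuous_of_forall_abs_sub_le (heprop f K hf))
    (isOpen_openArc a b) hne

/-- For an asymptotically stable Feller Markov operator on the circle with the
e-property, whose invariant measure has full support, the mass given by `Pᵐδ_x` to
any nonempty open arc is bounded below uniformly in `x`, for some iterate `m`. -/
theorem uniform_lower_bound_on_arcs
    (P : Measure Circle1 → Measure Circle1)
    (hMarkov : ∀ μ : Measure Circle1, IsProbabilityMeasure μ → IsProbabilityMeasure (P μ))
    (U : C(Circle1, ℝ) →ₗ[ℝ] C(Circle1, ℝ))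
    (hFeller : ∀ (f : C(Circle1, ℝ)) (μ : Measure Circle1), IsProbabilityMeasure μ →
      ∫ x, U f x ∂μ = ∫ x, f x ∂(P μ))
    (μstar : Measure Circle1) [IsProbabilityMeasure μstar]
    (hinv : P μstar = μstar)
    (hfull : ∀ V : Set Circle1, IsOpen V → V.Nonempty → 0 < μstar V)
    (hstable : ∀ (ν : Measure Circle1), IsProbabilityMeasure ν → ∀ f : C(Circle1, ℝ),
      Tendsto (fun n : ℕ => ∫ x, f x ∂(P^[n] ν)) atTop (nhds (∫ x, f x ∂μstar)))
    (heprop : ∀ (f : Circle1 → ℝ) (L : NNReal), LipschitzWith L f →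
      ∀ x : Circle1, ∀ ε > (0 : ℝ), ∃ δ > (0 : ℝ), ∀ y : Circle1, dist y x < δ →
        ∀ n : ℕ, |(∫ z, f z ∂(P^[n] (Measure.dirac y))) -
          (∫ z, f z ∂(P^[n] (Measure.dirac x)))| ≤ ε) :
    ∀ a b : Circle1, (openArc a b).Nonempty →
      ∃ m : ℕ, 0 < ⨅ x : Circle1, (P^[m] (Measure.dirac x)) (openArc a b) :=
  uniform_lower_bound_on_arcs_general P hMarkov μstar hfull hstable heprop
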